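/- Let p be a prime, A := 𝔽_p[X,X⁻¹], H := { [[X^n, P],[0, X^{−n}]] : n ∈ ℤ, P ∈ A } ≤ SL₂(A), and S := { [[X,0],[0,X⁻¹]], [[X⁻¹,0],[0,X]], [[1,1],[0,1]], [[1,−1],[0,1]], [[1,X],[0,1]], [[1,−X],[0,1]] }, a symmetric generating set of H. Let L_S be the word length on H associated to S: L_S(h) := min{ k : h is a product of a list of k elements of S }. Then H does not have radial rapid decay with respect to L_S: there is no polynomial P with real coefficients such that ⦀f⦀ ≤ P(L_S(f))·‖f‖₂ for every radial finitely supported f : H → ℂ. -/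

import Mathlib

open LaurentPolynomial
open scoped MatrixGroups

namespace Stmt17

variable {G : Type*} [Group G]

/-- Convolution of a finitely supported function with an arbitrary function. -/
noncomputable def conv (f : G →₀ ℂ) (ξ : G → ℂ) : G → ℂ :=
  fun g => ∑ h ∈ f.support, f h * ξ (h⁻¹ * g)

/-- The operator norm of the convolution operator `ξ ↦ f * ξ` on `ℓ²(G)` is at most `C`. -/
noncomputable def ConvOpNormLE (f : G →₀ ℂ) (C : ℝ) : Prop :=
  ∀ ξ : lp (fun _ : G => ℂ) 2, ∃ hmem : Memℓp (conv f (ξ : ∀ _ : G, ℂ)) 2,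
    ‖(⟨conv f (ξ : ∀ _ : G, ℂ), hmem⟩ : lp (fun _ : G => ℂ) 2)‖ ≤ C * ‖ξ‖

/-- The ℓ²-norm of a finitely supported function. -/
noncomputable def l2norm (f : G →₀ ℂ) : ℝ :=
  Real.sqrt (∑ g ∈ f.support, ‖f g‖ ^ 2)

/-- `L(f) = max {L g : f g ≠ 0}`. -/
noncomputable def lenOf (L : G → ℝ) (f : G →₀ ℂ) : ℝ :=
  sSup (L '' {g | f g ≠ 0})

def Radial (L : G → ℝ) (f : G →₀ ℂ) : Prop :=
  ∀ g₁ g₂, L g₁ = L g₂ → f g₁ = f g₂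

/-- Radial rapid decay with respect to `L`. -/
def HasRRD (L : G → ℝ) : Prop :=
  ∃ Q : Polynomial ℝ, ∀ f : G →₀ ℂ, Radial L f →
    ConvOpNormLE f (Q.eval (lenOf L f) * l2norm f)

/-- The six-element symmetric generating set
`S = {[[X,0],[0,X⁻¹]], [[X⁻¹,0],[0,X]], [[1,±1],[0,1]], [[1,±X],[0,1]]}`. -/
def Sset (p : ℕ) : Set (SL(2, LaurentPolynomial (ZMod p))) :=
  {M | (M : Matrix (Fin 2) (Fin 2) (LaurentPolynomial (ZMod p))) ∈
    ({!![T 1, 0; 0, T (-1)], !![T (-1), 0; 0, T 1],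
       !![1, 1; 0, 1], !![1, -1; 0, 1],
       !![1, T 1; 0, 1], !![1, -(T 1); 0, 1]} :
      Set (Matrix (Fin 2) (Fin 2) (LaurentPolynomial (ZMod p))))}

/-- The subgroup `H = {[[Xⁿ, P],[0, X⁻ⁿ]]}` of `SL₂(𝔽_p[X,X⁻¹])`, as a set. -/
def Hset (p : ℕ) : Set (SL(2, LaurentPolynomial (ZMod p))) :=
  {M | ∃ (n : ℤ) (P : LaurentPolynomial (ZMod p)),
    (M : Matrix (Fin 2) (Fin 2) (LaurentPolynomial (ZMod p))) = !![T n, P; 0, T (-n)]}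

end Stmt17

/-!
In a group satisfying Følner's condition the convolution operator by the indicator of a finite
set `S` has norm `#S`: test it against the indicator of `E⁻¹`, where `F * S ⊆ E` and `#E / #F`
is close to `1`. Applied to the spheres `S_n`, a radial rapid decay bound with polynomial `Q`
gives `#S_n ≤ Q(n)²`, so balls would grow polynomially.

Writing the elements of `H` as `[[Xᵃ, φ X⁻ᵃ], [0, X⁻ᵃ]]`, right multiplication by a generator
changes `a` by at most `1` or adds a monomial of degree `2a` or `2a + 1` to `φ`. Hence `H` is
amenable, with Følner sets `{(a, φ) : n ≤ a ≤ n + m', supp φ ⊆ [0, 2m + 1]}` where `m = 2n + m'`.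
On the other hand the `2ᵏ` elements with `a = 0` and `φ = ∑ bᵢ X²ⁱ`, `b ∈ {0, 1}ᵏ`, have length
at most `3k`, so balls grow exponentially.
-/

theorem Set.Finite.setOf_exists_list_prod {M : Type*} [Monoid M] {S : Set M} (hS : S.Finite)
    (n : ℕ) : {g | ∃ l : List M, l.length ≤ n ∧ (∀ x ∈ l, x ∈ S) ∧ l.prod = g}.Finite := by
  have : Finite S := hS.to_subtype
  refine ((List.finite_length_le S n).image fun l => (l.map (↑)).prod).subset ?_
  rintro _ ⟨l, hl, hS, rfl⟩
  lift l to List S using hS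
  exact ⟨l, by simpa using hl, rfl⟩

theorem Polynomial.abs_eval_le_sum_abs_coeff_mul_pow (Q : Polynomial ℝ) {x y : ℝ} (hxy : |x| ≤ y)
    (hy : 1 ≤ y) :
    |Q.eval x| ≤ (∑ i ∈ Finset.range (Q.natDegree + 1), |Q.coeff i|) * y ^ Q.natDegree := by
  rw [Polynomial.eval_eq_sum_range, Finset.sum_mul]
  refine (Finset.abs_sum_le_sum_abs _ _).trans (Finset.sum_le_sum fun i hi => ?_)
  rw [abs_mul, abs_pow]
  gcongr
  calc |x| ^ i ≤ y ^ i := pow_le_pow_left₀ (abs_nonneg x) hxy i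
    _ ≤ y ^ Q.natDegree := pow_le_pow_right₀ hy (Nat.lt_succ_iff.1 (Finset.mem_range.1 hi))

theorem not_forall_two_pow_le_mul_pow (B : ℝ) (c d : ℕ) :
    ¬ ∀ k : ℕ, (2 : ℝ) ^ k ≤ B * ((c * k + 1 : ℕ) : ℝ) ^ d := by
  intro h
  set K := |B| * ((c : ℝ) + 1) ^ d
  have hlim := (tendsto_pow_const_div_const_pow_of_one_lt d one_lt_two).const_mul K
  rw [mul_zero] at hlim
  obtain ⟨k, hsmall, hk⟩ :=
    ((hlim.eventually (gt_mem_nhds one_pos)).and (Filter.eventually_ge_atTop 1)).exists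
  have hpow : (0 : ℝ) < 2 ^ k := by positivity
  have hck : ((c * k + 1 : ℕ) : ℝ) ≤ ((c : ℝ) + 1) * k := by
    have : (1 : ℝ) ≤ k := by exact_mod_cast hk
    push_cast; nlinarith
  have := calc (2 : ℝ) ^ k ≤ B * ((c * k + 1 : ℕ) : ℝ) ^ d := h k
    _ ≤ |B| * (((c : ℝ) + 1) * k) ^ d := by gcongr; exact le_abs_self B
    _ = K * ((k : ℝ) ^ d / 2 ^ k) * 2 ^ k := by
      rw [mul_assoc K, div_mul_cancel₀ _ hpow.ne', mul_pow]; ring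
    _ < 1 * 2 ^ k := by gcongr
  linarith

namespace Stmt17

open scoped Pointwise

section Convolution

variable {G : Type*} [DecidableEq G]

noncomputable def indicator (s : Finset G) : G →₀ ℂ :=
  ⟨s, fun g => if g ∈ s then 1 else 0, fun g => by simp⟩

theorem indicator_apply (s : Finset G) (g : G) : indicator s g = if g ∈ s then 1 else 0 := rfl

theorem support_indicator (s : Finset G) : (indicator s).support = s := rfl

theorem l2norm_indicator (s : Finset G) : l2norm (indicator s) = √s.card := by
  rw [l2norm, support_indicator, Finset.card_eq_sum_ones, Nat.cast_sum]
  refine congrArg _ (Finset.sum_congr rfl fun g hg => ?_)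
  simp [indicator_apply, hg]

theorem lenOf_indicator {L : G → ℝ} {s : Finset G} (hs : s.Nonempty) {r : ℝ}
    (hL : ∀ g ∈ s, L g = r) : lenOf L (indicator s) = r := by
  have hsupp : {g | indicator s g ≠ 0} = (s : Set G) := by
    ext g
    by_cases h : g ∈ s <;> simp [indicator_apply, h]
  rw [lenOf, hsupp, (Set.eq_singleton_iff_nonempty_unique_mem.2
    ⟨hs.to_set.image L, ?_⟩ : L '' (s : Set G) = {r}), csSup_singleton]
  rintro _ ⟨g, hg, rfl⟩
  exact hL g hg

theorem radial_indicator {L : G → ℝ} {s : Finset G} {r : ℝ} (hs : ∀ g, g ∈ s ↔ L g = r) :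
    Radial L (indicator s) := by
  intro g₁ g₂ h
  simp only [indicator_apply, hs, h]

variable [Group G]

theorem ConvOpNormLE.nonneg {f : G →₀ ℂ} {C : ℝ} (hC : ConvOpNormLE f C) : 0 ≤ C := by
  obtain ⟨_, hle⟩ := hC (lp.single 2 1 1)
  rw [lp.norm_single (by norm_num), norm_one, mul_one] at hle
  exact (norm_nonneg _).trans hle

theorem card_mul_sqrt_le_of_convOpNormLE {S F E : Finset G}
    (hFSE : ∀ w ∈ F, ∀ s ∈ S, w * s ∈ E) {C : ℝ} (hC : ConvOpNormLE (indicator S) C) :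
    (S.card : ℝ) * √F.card ≤ C * √E.card := by
  set ξ : lp (fun _ : G => ℂ) 2 := ∑ g ∈ E⁻¹, lp.single 2 g 1
  have hξ : ∀ g, (ξ : G → ℂ) g = if g ∈ E⁻¹ then 1 else 0 := by
    intro g
    simp only [ξ, lp.coeFn_sum, lp.coeFn_single, Finset.sum_apply, Pi.single_apply]
    rw [Finset.sum_ite_eq]
  have hξ_norm : ‖ξ‖ = √E.card := by
    have h := lp.norm_sum_single (p := 2) (by norm_num) (fun _ : G => (1 : ℂ)) E⁻¹
    simp only [ENNReal.toReal_ofNat, Real.rpow_two, norm_one, one_pow, Finset.sum_const,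
      Finset.card_inv, nsmul_eq_mul, mul_one] at h
    rw [← h, Real.sqrt_sq (norm_nonneg _)]
  obtain ⟨hmem, hle⟩ := hC ξ
  set η : lp (fun _ : G => ℂ) 2 := ⟨_, hmem⟩
  have hη : ∀ w ∈ F, (η : G → ℂ) w⁻¹ = S.card := by
    intro w hw
    change ∑ s ∈ (indicator S).support, _ = _
    rw [support_indicator, Finset.card_eq_sum_ones, Nat.cast_sum]
    refine Finset.sum_congr rfl fun s hs => ?_
    rw [indicator_apply, if_pos hs, hξ, ← mul_inv_rev,
      if_pos (Finset.inv_mem_inv (hFSE w hw s hs)), mul_one, Nat.cast_one]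
  have hη_norm : (S.card : ℝ) ^ 2 * F.card ≤ ‖η‖ ^ 2 := by
    have h := lp.sum_rpow_le_norm_rpow (p := 2) (by norm_num) η F⁻¹
    simp only [ENNReal.toReal_ofNat, Real.rpow_two] at h
    have hterm : ∀ g ∈ F⁻¹, ‖(η : G → ℂ) g‖ ^ 2 = (S.card : ℝ) ^ 2 := fun g hg => by
      rw [← inv_inv g, hη _ (Finset.mem_inv'.1 hg), Complex.norm_natCast]
    rwa [Finset.sum_congr rfl hterm, Finset.sum_const, Finset.card_inv, nsmul_eq_mul,
      mul_comm] at h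
  calc (S.card : ℝ) * √F.card = √((S.card : ℝ) ^ 2 * F.card) := by
        rw [Real.sqrt_mul (by positivity), Real.sqrt_sq (by positivity)]
    _ ≤ ‖η‖ := Real.sqrt_le_iff.2 ⟨norm_nonneg _, hη_norm⟩
    _ ≤ C * ‖ξ‖ := hle
    _ = C * √E.card := by rw [hξ_norm]

end Convolution

section Folner

variable (G : Type*) [Group G]

def FolnerCondition : Prop :=
  ∀ (S : Finset G) (ε : ℝ), 0 < ε → ∃ F E : Finset G, F.Nonempty ∧
    (∀ w ∈ F, ∀ s ∈ S, w * s ∈ E) ∧ (E.card : ℝ) ≤ (1 + ε) * F.card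

variable {G} [DecidableEq G]

theorem card_le_of_convOpNormLE (hG : FolnerCondition G) (S : Finset G) {C : ℝ}
    (hC : ConvOpNormLE (indicator S) C) : (S.card : ℝ) ≤ C := by
  have hC0 := hC.nonneg
  have hsq : ∀ ε > 0, (S.card : ℝ) ^ 2 ≤ C ^ 2 * (1 + ε) := by
    intro ε hε
    obtain ⟨F, E, hF, hFSE, hE⟩ := hG S ε hε
    have hF0 : (0 : ℝ) < F.card := by exact_mod_cast hF.card_pos
    have h := card_mul_sqrt_le_of_convOpNormLE hFSE hC
    have h2 : (S.card : ℝ) ^ 2 * F.card ≤ C ^ 2 * E.card := by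
      have := pow_le_pow_left₀ (by positivity) h 2
      rwa [mul_pow, mul_pow, Real.sq_sqrt (by positivity), Real.sq_sqrt (by positivity)] at this
    have h3 : C ^ 2 * E.card ≤ C ^ 2 * (1 + ε) * F.card := by
      rw [mul_assoc]; exact mul_le_mul_of_nonneg_left hE (by positivity)
    exact le_of_mul_le_mul_right (h2.trans h3) hF0
  refine (pow_le_pow_iff_left₀ (by positivity) hC0 two_ne_zero).1 (le_of_forall_pos_le_add ?_)
  intro δ hδ
  calc (S.card : ℝ) ^ 2 ≤ C ^ 2 * (1 + δ / (C ^ 2 + 1)) := hsq _ (by positivity)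
    _ = C ^ 2 + δ * (C ^ 2 / (C ^ 2 + 1)) := by ring
    _ ≤ C ^ 2 + δ * 1 := by gcongr; exact (div_le_one (by positivity)).2 (by linarith)
    _ = C ^ 2 + δ := by ring

theorem card_le_eval_sq_of_radial_bound (hG : FolnerCondition G) {L : G → ℝ} {Q : Polynomial ℝ}
    (hQ : ∀ f : G →₀ ℂ, Radial L f → ConvOpNormLE f (Q.eval (lenOf L f) * l2norm f))
    {s : Finset G} {r : ℝ} (hs : ∀ g, g ∈ s ↔ L g = r) : (s.card : ℝ) ≤ Q.eval r ^ 2 := by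
  rcases s.eq_empty_or_nonempty with rfl | hne
  · simpa using sq_nonneg _
  have h := card_le_of_convOpNormLE hG s (hQ _ (radial_indicator hs))
  rw [lenOf_indicator hne (fun g hg => (hs g).1 hg), l2norm_indicator] at h
  have hpos : 0 < √(s.card : ℝ) := Real.sqrt_pos.2 (by exact_mod_cast hne.card_pos)
  have hQr : √(s.card : ℝ) ≤ Q.eval r := by
    refine le_of_mul_le_mul_right ?_ hpos
    rwa [Real.mul_self_sqrt (Nat.cast_nonneg _)]
  calc (s.card : ℝ) = √(s.card : ℝ) ^ 2 := (Real.sq_sqrt (Nat.cast_nonneg _)).symm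
    _ ≤ Q.eval r ^ 2 := pow_le_pow_left₀ hpos.le hQr 2

theorem not_hasRRD_of_folner_of_exponential_growth (hG : FolnerCondition G) {L : G → ℕ}
    (hfin : ∀ n, {g | L g = n}.Finite) (c : ℕ)
    (hgrowth : ∀ k : ℕ, ∃ s : Finset G, 2 ^ k ≤ s.card ∧ ∀ g ∈ s, L g ≤ c * k) :
    ¬ HasRRD (fun g => (L g : ℝ)) := by
  classical
  rintro ⟨Q, hQ⟩
  set P := Q ^ 2
  set B := ∑ i ∈ Finset.range (P.natDegree + 1), |P.coeff i|
  refine not_forall_two_pow_le_mul_pow B c (P.natDegree + 1) fun k => ?_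
  obtain ⟨s, hs, hsL⟩ := hgrowth k
  set N := c * k
  have hsphere : ∀ j : ℕ, ((hfin j).toFinset.card : ℝ) ≤ P.eval (j : ℝ) := fun j => by
    rw [Polynomial.eval_pow]
    exact card_le_eval_sq_of_radial_bound hG hQ fun g => by simp
  have hP : ∀ j ∈ Finset.range (N + 1), P.eval (j : ℝ) ≤ B * ((N + 1 : ℕ) : ℝ) ^ P.natDegree :=
    fun j hj => (le_abs_self _).trans (P.abs_eval_le_sum_abs_coeff_mul_pow
      (by rw [Nat.abs_cast]; exact_mod_cast (Finset.mem_range.1 hj).le) (by simp))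
  have hcover : s ⊆ (Finset.range (N + 1)).biUnion fun j => (hfin j).toFinset := fun g hg =>
    Finset.mem_biUnion.2 ⟨L g, Finset.mem_range.2 (Nat.lt_succ_of_le (hsL g hg)), by simp⟩
  calc (2 : ℝ) ^ k ≤ s.card := by exact_mod_cast hs
    _ ≤ ∑ j ∈ Finset.range (N + 1), ((hfin j).toFinset.card : ℝ) := by
      exact_mod_cast (Finset.card_le_card hcover).trans Finset.card_biUnion_le
    _ ≤ ∑ j ∈ Finset.range (N + 1), B * ((N + 1 : ℕ) : ℝ) ^ P.natDegree :=
      Finset.sum_le_sum fun j hj => (hsphere j).trans (hP j hj)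
    _ = B * ((N + 1 : ℕ) : ℝ) ^ (P.natDegree + 1) := by
      rw [Finset.sum_const, Finset.card_range, nsmul_eq_mul]; push_cast; ring

end Folner

section Coordinates

variable {R : Type*} [CommRing R]

noncomputable def toSL (x : ℤ × R[T;T⁻¹]) : SL(2, R[T;T⁻¹]) :=
  ⟨!![T x.1, x.2 * T (-x.1); 0, T (-x.1)], by
    rw [Matrix.det_fin_two_of, mul_zero, sub_zero, ← T_add, add_neg_cancel, T_zero]⟩

theorem coe_toSL (x : ℤ × R[T;T⁻¹]) :
    (toSL x : Matrix (Fin 2) (Fin 2) R[T;T⁻¹]) = !![T x.1, x.2 * T (-x.1); 0, T (-x.1)] := rfl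

theorem toSL_mul (x y : ℤ × R[T;T⁻¹]) :
    toSL x * toSL y = toSL (x.1 + y.1, x.2 + T (2 * x.1) * y.2) := by
  obtain ⟨a, P⟩ := x
  obtain ⟨b, Q⟩ := y
  have hinv : (T a * T (-a) : R[T;T⁻¹]) = 1 := by rw [← T_add, add_neg_cancel, T_zero]
  have hsum : (T (-(a + b)) : R[T;T⁻¹]) = T (-a) * T (-b) := by rw [← T_add, neg_add]
  have hdouble : (T (2 * a) : R[T;T⁻¹]) = T a * T a := by rw [← T_add, two_mul]
  refine Subtype.ext ?_
  change !![T a, P * T (-a); 0, T (-a)] * !![T b, Q * T (-b); 0, T (-b)] =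
    !![T (a + b), (P + T (2 * a) * Q) * T (-(a + b)); 0, T (-(a + b))]
  have h00 : T a * T b + P * T (-a) * 0 = (T (a + b) : R[T;T⁻¹]) := by rw [T_add]; ring
  have h01 : T a * (Q * T (-b)) + P * T (-a) * T (-b) = (P + T (2 * a) * Q) * T (-(a + b)) := by
    rw [hsum, hdouble]; linear_combination (-(T a * Q * T (-b))) * hinv
  have h10 : (0 : R[T;T⁻¹]) * T b + T (-a) * 0 = 0 := by ring
  have h11 : 0 * (Q * T (-b)) + T (-a) * T (-b) = (T (-(a + b)) : R[T;T⁻¹]) := by rw [hsum]; ring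
  rw [Matrix.mul_fin_two, h00, h01, h10, h11]

theorem toSL_zero : toSL ((0, 0) : ℤ × R[T;T⁻¹]) = 1 := by
  refine Subtype.ext (Matrix.ext fun i j => ?_)
  fin_cases i <;> fin_cases j <;> simp [toSL]

theorem toSL_injective [Nontrivial R] : Function.Injective (toSL : ℤ × R[T;T⁻¹] → _) := by
  rintro ⟨a, P⟩ ⟨b, Q⟩ h
  have hM := congrArg (fun M : SL(2, R[T;T⁻¹]) => (M : Matrix (Fin 2) (Fin 2) R[T;T⁻¹])) h
  have h00 : (T a : R[T;T⁻¹]) = T b := by simpa [toSL] using congrFun (congrFun hM 0) 0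
  have h01 : P * T (-a) = Q * T (-b) := by simpa [toSL] using congrFun (congrFun hM 0) 1
  obtain rfl : a = b := by
    by_contra hne
    simpa [Ne.symm hne] using congrArg (fun f : R[T;T⁻¹] => f.coeff a) h00
  exact Prod.ext rfl ((isUnit_T (-a)).mul_left_inj.1 h01)

end Coordinates

section SupportedIn

variable {R : Type*} [CommRing R] [Fintype R]

noncomputable def supportedIn (s : Finset ℤ) : Finset R[T;T⁻¹] :=
  (s.finsupp fun _ => Finset.univ).map AddMonoidAlgebra.coeffEquiv.symm.toEmbedding

theorem mem_supportedIn {s : Finset ℤ} {φ : R[T;T⁻¹]} :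
    φ ∈ supportedIn s ↔ φ.coeff.support ⊆ s := by
  rw [supportedIn, Finset.mem_map_equiv, Finset.mem_finsupp_iff]
  simp

theorem zero_mem_supportedIn (s : Finset ℤ) : (0 : R[T;T⁻¹]) ∈ supportedIn s := by
  simp [mem_supportedIn]

theorem add_C_mul_T_mem_supportedIn {s : Finset ℤ} {φ : R[T;T⁻¹]} (hφ : φ ∈ supportedIn s)
    {k : ℤ} (hk : k ∈ s) (c : R) : φ + C c * T k ∈ supportedIn s := by
  classical
  rw [mem_supportedIn] at hφ ⊢
  refine (Finsupp.support_add).trans (Finset.union_subset hφ ?_)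
  exact (support_C_mul_T c k).trans (Finset.singleton_subset_iff.2 hk)

end SupportedIn

open Polynomial in
noncomputable def binaryPoly {R : Type*} [CommRing R] : List Bool → R[X]
  | [] => 0
  | b :: bs => (if b then 1 else 0) + X ^ 2 * binaryPoly bs

theorem binaryPoly_inj {R : Type*} [CommRing R] [Nontrivial R] :
    ∀ {bs cs : List Bool}, bs.length = cs.length →
      binaryPoly (R := R) bs = binaryPoly cs → bs = cs
  | [], [], _, _ => rfl
  | b :: bs, c :: cs, hlen, h => by
    have hbc : b = c := by
      have h0 := congrArg (Polynomial.coeff · 0) h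
      cases b <;> cases c <;> simp [binaryPoly] at h0 ⊢
    subst hbc
    have htail : binaryPoly (R := R) bs = binaryPoly cs :=
      (Polynomial.isRegular_X_pow 2).left (add_left_cancel h)
    rw [binaryPoly_inj (Nat.succ_injective hlen) htail]

section Generators

variable {p : ℕ}

theorem toSL_mem_Sset_of_eq {x : ℤ × (ZMod p)[T;T⁻¹]}
    (hx : x = (1, 0) ∨ x = (-1, 0) ∨ x = (0, 1)) : toSL x ∈ Sset p := by
  rcases hx with rfl | rfl | rfl
  · exact Or.inl (by simp [coe_toSL])
  · exact Or.inr (Or.inl (by simp [coe_toSL]))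
  · exact Or.inr (Or.inr (Or.inl (by simp [coe_toSL])))

theorem eq_toSL_of_mem_Sset {M : SL(2, (ZMod p)[T;T⁻¹])} (hM : M ∈ Sset p) :
    M = toSL (1, 0) ∨ M = toSL (-1, 0) ∨
      ∃ (c : ZMod p) (k : ℤ), (k = 0 ∨ k = 1) ∧ M = toSL (0, C c * T k) := by
  simp only [Sset, Set.mem_insert_iff, Set.mem_singleton_iff] at hM
  rcases hM with h | h | h | h | h | h
  · exact Or.inl (Subtype.ext (by simp [h, coe_toSL]))
  · exact Or.inr (Or.inl (Subtype.ext (by simp [h, coe_toSL])))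
  · exact Or.inr (Or.inr ⟨1, 0, Or.inl rfl, Subtype.ext (by simp [h, coe_toSL])⟩)
  · exact Or.inr (Or.inr ⟨-1, 0, Or.inl rfl, Subtype.ext (by simp [h, coe_toSL])⟩)
  · exact Or.inr (Or.inr ⟨1, 1, Or.inr rfl, Subtype.ext (by simp [h, coe_toSL])⟩)
  · exact Or.inr (Or.inr ⟨-1, 1, Or.inr rfl, Subtype.ext (by simp [h, coe_toSL])⟩)

theorem Sset_finite : (Sset p).Finite :=
  (Set.toFinite _).preimage Subtype.val_injective.injOn

end Generators

section Lamplighter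

variable {p : ℕ} [Fact p.Prime] {H : Subgroup (SL(2, (ZMod p)[T;T⁻¹]))}
  (hmem : ∀ x, toSL x ∈ H)

noncomputable def toH (x : ℤ × (ZMod p)[T;T⁻¹]) : H := ⟨toSL x, hmem x⟩

theorem toH_mul (x y : ℤ × (ZMod p)[T;T⁻¹]) :
    toH hmem x * toH hmem y = toH hmem (x.1 + y.1, x.2 + T (2 * x.1) * y.2) :=
  Subtype.ext (toSL_mul x y)

theorem toH_injective : Function.Injective (toH hmem) :=
  fun _ _ h => toSL_injective (congrArg Subtype.val h)

theorem exists_toH_mul_eq_of_mem_Sset {m a : ℤ} {φ : (ZMod p)[T;T⁻¹]}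
    (hφ : φ ∈ supportedIn (Finset.Icc 0 (2 * m + 1))) (ha₀ : 0 ≤ a) (ham : a ≤ m) {s : H}
    (hs : (s : SL(2, (ZMod p)[T;T⁻¹])) ∈ Sset p) :
    ∃ a' φ', φ' ∈ supportedIn (Finset.Icc 0 (2 * m + 1)) ∧ |a' - a| ≤ 1 ∧
      toH hmem (a, φ) * s = toH hmem (a', φ') := by
  rcases eq_toSL_of_mem_Sset hs with h | h | ⟨c, k, hk, h⟩
  · refine ⟨a + 1, φ, hφ, by simp, ?_⟩
    rw [show s = toH hmem (1, 0) from Subtype.ext h, toH_mul]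
    simp
  · refine ⟨a - 1, φ, hφ, by simp, ?_⟩
    rw [show s = toH hmem (-1, 0) from Subtype.ext h, toH_mul]
    simp [sub_eq_add_neg]
  · refine ⟨a, φ + C c * T (2 * a + k), add_C_mul_T_mem_supportedIn hφ ?_ c, by simp, ?_⟩
    · rw [Finset.mem_Icc]; omega
    · rw [show s = toH hmem (0, C c * T k) from Subtype.ext h, toH_mul, T_add]
      simp only [add_zero]
      ring_nf

theorem exists_toH_mul_list_prod_eq {m : ℤ} (l : List H)
    (hl : ∀ s ∈ l, (s : SL(2, (ZMod p)[T;T⁻¹])) ∈ Sset p) {a : ℤ} {φ : (ZMod p)[T;T⁻¹]}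
    (hφ : φ ∈ supportedIn (Finset.Icc 0 (2 * m + 1))) (ha₀ : l.length ≤ a)
    (ham : a + l.length ≤ m) :
    ∃ a' φ', φ' ∈ supportedIn (Finset.Icc 0 (2 * m + 1)) ∧ |a' - a| ≤ l.length ∧
      toH hmem (a, φ) * l.prod = toH hmem (a', φ') := by
  induction l generalizing a φ with
  | nil => exact ⟨a, φ, hφ, by simp, by simp⟩
  | cons s l ih =>
    simp only [List.length_cons, Nat.cast_add, Nat.cast_one] at ha₀ ham ⊢
    have hl₀ : (0 : ℤ) ≤ l.length := Nat.cast_nonneg _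
    obtain ⟨b, ψ, hψ, hb, hs⟩ := exists_toH_mul_eq_of_mem_Sset hmem (a := a) hφ (by omega)
      (by omega) (hl s (List.mem_cons_self ..))
    rw [abs_le] at hb
    obtain ⟨a', φ', hφ', ha', hprod⟩ :=
      ih (fun t ht => hl t (List.mem_cons_of_mem s ht)) (a := b) hψ (by omega) (by omega)
    refine ⟨a', φ', hφ', ?_, by rw [List.prod_cons, ← mul_assoc, hs, hprod]⟩
    rw [abs_le] at ha' ⊢
    constructor <;> omega

noncomputable def folnerBox (lo hi m : ℤ) : Finset H :=
  (Finset.Icc lo hi ×ˢ supportedIn (Finset.Icc 0 (2 * m + 1))).map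
    ⟨toH hmem, toH_injective hmem⟩

theorem mem_folnerBox {lo hi m a : ℤ} {φ : (ZMod p)[T;T⁻¹]} (ha : lo ≤ a ∧ a ≤ hi)
    (hφ : φ ∈ supportedIn (Finset.Icc 0 (2 * m + 1))) : toH hmem (a, φ) ∈ folnerBox hmem lo hi m :=
  Finset.mem_map_of_mem _ (Finset.mem_product.2 ⟨Finset.mem_Icc.2 ha, hφ⟩)

theorem card_folnerBox (lo hi m : ℤ) (h : lo ≤ hi + 1) :
    ((folnerBox hmem lo hi m).card : ℝ) =
      (hi + 1 - lo : ℤ) * (supportedIn (R := ZMod p) (Finset.Icc 0 (2 * m + 1))).card := by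
  rw [folnerBox, Finset.card_map, Finset.card_product, Int.card_Icc, Nat.cast_mul,
    ← Int.cast_natCast (Int.toNat _), Int.toNat_of_nonneg (by omega)]

include hmem in
theorem folnerCondition_of_forall_exists_list_prod
    (hgen : ∀ h : H, ∃ l : List H,
      (∀ s ∈ l, (s : SL(2, (ZMod p)[T;T⁻¹])) ∈ Sset p) ∧ l.prod = h) :
    FolnerCondition H := by
  intro S ε hε
  choose word hword hprod using hgen
  set n : ℕ := S.sup fun s => (word s).length
  obtain ⟨m', hm'⟩ := exists_nat_gt (2 * n / ε)
  set m : ℤ := 2 * n + m'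
  refine ⟨folnerBox hmem n (n + m') m, folnerBox hmem 0 m m,
    ⟨_, mem_folnerBox hmem (a := n) ⟨le_rfl, by omega⟩ (zero_mem_supportedIn _)⟩, ?_, ?_⟩
  · intro w hw s hs
    obtain ⟨⟨a, φ⟩, haφ, rfl⟩ := Finset.mem_map.1 hw
    simp only [Finset.mem_product, Finset.mem_Icc] at haφ
    obtain ⟨ha, hφ⟩ := haφ
    have hlen : (word s).length ≤ n := Finset.le_sup (f := fun s => (word s).length) hs
    obtain ⟨a', φ', hφ', ha', heq⟩ :=
      exists_toH_mul_list_prod_eq hmem (word s) (hword s) (a := a) hφ (by omega) (by omega)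
    rw [Function.Embedding.coeFn_mk, ← hprod s, heq]
    exact mem_folnerBox hmem (by rw [abs_le] at ha'; omega) hφ'
  · rw [card_folnerBox hmem 0 m m (by omega), card_folnerBox hmem n (n + m') m (by omega)]
    have hε' : 2 * (n : ℝ) < ε * m' := (div_lt_iff₀' hε).1 hm'
    rw [← mul_assoc]
    refine mul_le_mul_of_nonneg_right ?_ (Nat.cast_nonneg _)
    push_cast [m]
    nlinarith

/-- Conjugation by `t = toH (1, 0)` multiplies the second coordinate by `X²`, so the word
`u ^ b * t * w * t⁻¹` with `u = toH (0, 1)` evaluates to `b + X² · P` if `w` evaluates to `P`. -/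
noncomputable def binaryWord : List Bool → List H
  | [] => []
  | b :: bs =>
    (if b then [toH hmem (0, 1)] else []) ++
      toH hmem (1, 0) :: (binaryWord bs ++ [toH hmem (-1, 0)])

theorem prod_binaryWord (bs : List Bool) :
    (binaryWord hmem bs).prod = toH hmem (0, Polynomial.toLaurent (binaryPoly bs)) := by
  induction bs with
  | nil => exact (Subtype.ext toSL_zero).symm
  | cons b bs ih =>
    cases b <;> simp [binaryWord, binaryPoly, ih, toH_mul, ← mul_assoc]

theorem length_binaryWord_le (bs : List Bool) : (binaryWord hmem bs).length ≤ 3 * bs.length := by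
  induction bs with
  | nil => simp [binaryWord]
  | cons b bs ih => cases b <;> simp [binaryWord] <;> omega

theorem mem_Sset_of_mem_binaryWord {bs : List Bool} {s : H} (hs : s ∈ binaryWord hmem bs) :
    (s : SL(2, (ZMod p)[T;T⁻¹])) ∈ Sset p := by
  induction bs with
  | nil => simp [binaryWord] at hs
  | cons b bs ih =>
    simp only [binaryWord, List.mem_append, List.mem_cons] at hs
    rcases hs with hs | rfl | hs | rfl | hs
    · split_ifs at hs
      · rw [List.mem_singleton.1 hs]
        exact toSL_mem_Sset_of_eq (Or.inr (Or.inr rfl))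
      · exact absurd hs List.not_mem_nil
    · exact toSL_mem_Sset_of_eq (Or.inl rfl)
    · exact ih hs
    · exact toSL_mem_Sset_of_eq (Or.inr (Or.inl rfl))
    · exact absurd hs List.not_mem_nil

include hmem in
theorem exists_card_ge_two_pow_of_length_le (k : ℕ) :
    ∃ s : Finset H, 2 ^ k ≤ s.card ∧ ∀ g ∈ s, ∃ l : List H, l.length ≤ 3 * k ∧
      (∀ x ∈ l, (x : SL(2, (ZMod p)[T;T⁻¹])) ∈ Sset p) ∧ l.prod = g := by
  let word (ψ : Fin k → Bool) : List H := binaryWord hmem (List.ofFn ψ)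
  have hinj : Function.Injective fun ψ => (word ψ).prod := fun ψ χ h => by
    simp only [word, prod_binaryWord] at h
    exact List.ofFn_injective (binaryPoly_inj (by simp)
      (Polynomial.toLaurent_injective (congrArg Prod.snd (toH_injective hmem h))))
  refine ⟨Finset.univ.map ⟨_, hinj⟩, by simp, fun g hg => ?_⟩
  obtain ⟨ψ, -, rfl⟩ := Finset.mem_map.1 hg
  exact ⟨word ψ, by simpa using length_binaryWord_le hmem (List.ofFn ψ),
    fun x hx => mem_Sset_of_mem_binaryWord hmem hx, rfl⟩

end Lamplighter

end Stmt17

theorem statement17_general (p : ℕ) [Fact p.Prime]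
    (Hsub : Subgroup (SL(2, LaurentPolynomial (ZMod p))))
    (hH : (Hsub : Set (SL(2, LaurentPolynomial (ZMod p)))) = Stmt17.Hset p)
    (LS : Hsub → ℕ)
    (hLS : ∀ h : Hsub, IsLeast
      {k : ℕ | ∃ l : List Hsub, l.length = k ∧
        (∀ x ∈ l, (x : SL(2, LaurentPolynomial (ZMod p))) ∈ Stmt17.Sset p) ∧
        l.prod = h}
      (LS h)) :
    ¬ Stmt17.HasRRD (fun h : Hsub => (LS h : ℝ)) := by
  open Stmt17 in
  have hmem : ∀ x, toSL x ∈ Hsub := fun x => by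
    rw [← SetLike.mem_coe, hH]
    exact ⟨x.1, x.2 * T (-x.1), rfl⟩
  have hgens : {s : Hsub | (s : SL(2, (ZMod p)[T;T⁻¹])) ∈ Sset p}.Finite :=
    Sset_finite.preimage Subtype.val_injective.injOn
  refine not_hasRRD_of_folner_of_exponential_growth
    (folnerCondition_of_forall_exists_list_prod hmem fun h => ?_) (fun n => ?_) 3 fun k => ?_
  · obtain ⟨l, -, hl, hprod⟩ := (hLS h).1
    exact ⟨l, hl, hprod⟩
  · refine (hgens.setOf_exists_list_prod n).subset fun h hn => ?_
    obtain ⟨l, hlen, hl, hprod⟩ := (hLS h).1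
    exact ⟨l, (hlen.trans hn).le, hl, hprod⟩
  · obtain ⟨s, hcard, hs⟩ := exists_card_ge_two_pow_of_length_le hmem k
    refine ⟨s, hcard, fun g hg => ?_⟩
    obtain ⟨l, hlen, hl, hprod⟩ := hs g hg
    exact ((hLS g).2 ⟨l, rfl, hl, hprod⟩).trans hlen

/-- **The lamplighter subgroup `H ≤ SL₂(𝔽_p[X,X⁻¹])` does not have radial rapid
decay with respect to the word length of `S`.** Here `Hsub` is the subgroup
`{[[Xⁿ,P],[0,X⁻ⁿ]]}`, `S` is the symmetric generating set
`{[[X^{±1},0],[0,X^{∓1}]], [[1,±1],[0,1]], [[1,±X],[0,1]]}` and `LS` is the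
associated word length: `LS h` is the least `k` such that `h` is a product of a
list of `k` elements of `S`. -/
theorem statement17 (p : ℕ) (hp : p.Prime) [Fact p.Prime]
    (Hsub : Subgroup (SL(2, LaurentPolynomial (ZMod p))))
    (hH : (Hsub : Set (SL(2, LaurentPolynomial (ZMod p)))) = Stmt17.Hset p)
    (LS : Hsub → ℕ)
    (hLS : ∀ h : Hsub, IsLeast
      {k : ℕ | ∃ l : List Hsub, l.length = k ∧
        (∀ x ∈ l, (x : SL(2, LaurentPolynomial (ZMod p))) ∈ Stmt17.Sset p) ∧
        l.prod = h}
      (LS h)) :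
    ¬ Stmt17.HasRRD (fun h : Hsub => (LS h : ℝ)) :=
  statement17_general p Hsub hH LS hLS
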